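/- Let U ⊆ ℂ be open, g₂, g₃ ∈ ℂ, and let p : U → ℂ be holomorphic with (p')² = 4p³ − g₂ p − g₃ and p'' = 6p² − g₂/2 on U. Define, for holomorphic f : U → ℂ, the operators H f = −f'' + 6 p f and A f = f^{(5)} − 15 p f''' − (45/2) p' f'' − 9 (5 p² − (3/4) g₂) f'. Then A (H f) = H (A f) for every holomorphic f : U → ℂ. -/
import Mathlib


/-- The Lamé operator `H f = -f'' + 6 p f` (with `l = 2`). -/
noncomputable def HLame (p : ℂ → ℂ) (f : ℂ → ℂ) : ℂ → ℂ :=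
  fun x => -(deriv (deriv f) x) + 6 * p x * f x

/-- The fifth-order operator
`A f = f⁽⁵⁾ - 15 p f''' - (45/2) p' f'' - 9 (5 p² - (3/4) g₂) f'`. -/
noncomputable def ALame (g₂ : ℂ) (p : ℂ → ℂ) (f : ℂ → ℂ) : ℂ → ℂ :=
  fun x => deriv^[5] f x - 15 * p x * deriv^[3] f x - (45 / 2) * deriv p x * deriv^[2] f x
    - 9 * (5 * (p x) ^ 2 - (3 / 4) * g₂) * deriv f x

theorem Lame_l2_operator_commutes
    (U : Set ℂ) (hU : IsOpen U) (g₂ g₃ : ℂ) (p : ℂ → ℂ)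
    (hp : DifferentiableOn ℂ p U)
    (hp' : ∀ x ∈ U, (deriv p x) ^ 2 = 4 * (p x) ^ 3 - g₂ * p x - g₃)
    (hp'' : ∀ x ∈ U, deriv (deriv p) x = 6 * (p x) ^ 2 - g₂ / 2) :
    ∀ f : ℂ → ℂ, DifferentiableOn ℂ f U →
      ∀ x ∈ U, ALame g₂ p (HLame p f) x = HLame p (ALame g₂ p f) x := by
  intro f hf x hx
  have hpA : AnalyticOnNhd ℂ p U := hp.analyticOnNhd hU
  have hfA : AnalyticOnNhd ℂ f U := hf.analyticOnNhd hU
  have hiter : ∀ g : ℂ → ℂ, AnalyticOnNhd ℂ g U → ∀ n : ℕ, AnalyticOnNhd ℂ (deriv^[n] g) U := by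
    intro g hg n
    induction n with
    | zero => simpa using hg
    | succ n ih => rw [Function.iterate_succ_apply']; exact ih.deriv
  have hFn : ∀ (n : ℕ), ∀ y ∈ U, HasDerivAt (deriv^[n] f) (deriv^[n + 1] f y) y := by
    intro n y hy
    rw [Function.iterate_succ_apply']
    exact (hiter f hfA n y hy).differentiableAt.hasDerivAt
  have hPn : ∀ (n : ℕ), ∀ y ∈ U, HasDerivAt (deriv^[n] p) (deriv^[n + 1] p y) y := by
    intro n y hy
    rw [Function.iterate_succ_apply']
    exact (hiter p hpA n y hy).differentiableAt.hasDerivAt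
  have hP0 : ∀ y ∈ U, HasDerivAt p (deriv p y) y := fun y hy => hPn 0 y hy
  have hP1 : ∀ y ∈ U, HasDerivAt (deriv p) (deriv (deriv p) y) y := fun y hy => hPn 1 y hy
  have hF0 : ∀ y ∈ U, HasDerivAt f (deriv f y) y := fun y hy => hFn 0 y hy
  have hF1 : ∀ y ∈ U, HasDerivAt (deriv f) (deriv^[2] f y) y := fun y hy => hFn 1 y hy
  have hF2 : ∀ y ∈ U, HasDerivAt (deriv (deriv f)) (deriv^[3] f y) y := fun y hy => hFn 2 y hy
  have hP0sq : ∀ y ∈ U, HasDerivAt (fun z => p z ^ 2) (2 * p y * deriv p y) y := by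
    intro y hy
    have h := (hP0 y hy).pow 2
    norm_num at h
    exact h
  have h1 : ∀ y ∈ U, deriv (HLame p f) y = (-1) * (deriv^[3] f y) + (6) * ((deriv p y) * (f y)) + (6) * ((p y) * (deriv f y)) := by
    intro y hy
    have hE : HasDerivAt (HLame p f) (((-(deriv^[3] f y)) + (((6) * (deriv p y)) * (f y) + ((6) * (p y)) * (deriv f y)))) y := ((hF2 y hy).neg).add ((HasDerivAt.const_mul (6) (hP0 y hy)).mul (hF0 y hy))
    rw [hE.deriv]
    ring
  have h2 : ∀ y ∈ U, deriv (deriv (HLame p f)) y = (-1) * (deriv^[4] f y) + (-3 * g₂) * (f y) + (12) * ((deriv p y) * (deriv f y)) + (6) * ((p y) * (deriv^[2] f y)) + (36) * (((p y) * (p y)) * (f y)) := by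
    intro y hy
    have heq : deriv (deriv (HLame p f)) y = deriv (fun z => (-1) * (deriv^[3] f z) + (6) * ((deriv p z) * (f z)) + (6) * ((p z) * (deriv f z))) y :=
      Filter.EventuallyEq.deriv_eq (Filter.eventuallyEq_of_mem (hU.mem_nhds hy) fun z hz => h1 z hz)
    have hE : HasDerivAt (fun z => (-1) * (deriv^[3] f z) + (6) * ((deriv p z) * (f z)) + (6) * ((p z) * (deriv f z))) ((((-1) * (deriv^[4] f y) + (6) * (((deriv (deriv p) y) * (f y) + (deriv p y) * (deriv f y)))) + (6) * (((deriv p y) * (deriv f y) + (p y) * (deriv^[2] f y))))) y := ((HasDerivAt.const_mul (-1) (hFn 3 y hy)).add (HasDerivAt.const_mul (6) ((hP1 y hy).mul (hF0 y hy)))).add (HasDerivAt.const_mul (6) ((hP0 y hy).mul (hF1 y hy)))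
    rw [heq, hE.deriv]
    linear_combination ((6) * (f y)) * hp'' y hy
  have h3 : ∀ y ∈ U, deriv (deriv (deriv (HLame p f))) y = (-1) * (deriv^[5] f y) + (-9 * g₂) * (deriv f y) + (18) * ((deriv p y) * (deriv^[2] f y)) + (6) * ((p y) * (deriv^[3] f y)) + (72) * (((p y) * (deriv p y)) * (f y)) + (108) * (((p y) * (p y)) * (deriv f y)) := by
    intro y hy
    have heq : deriv (deriv (deriv (HLame p f))) y = deriv (fun z => (-1) * (deriv^[4] f z) + (-3 * g₂) * (f z) + (12) * ((deriv p z) * (deriv f z)) + (6) * ((p z) * (deriv^[2] f z)) + (36) * (((p z) * (p z)) * (f z))) y :=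
      Filter.EventuallyEq.deriv_eq (Filter.eventuallyEq_of_mem (hU.mem_nhds hy) fun z hz => h2 z hz)
    have hE : HasDerivAt (fun z => (-1) * (deriv^[4] f z) + (-3 * g₂) * (f z) + (12) * ((deriv p z) * (deriv f z)) + (6) * ((p z) * (deriv^[2] f z)) + (36) * (((p z) * (p z)) * (f z))) ((((((-1) * (deriv^[5] f y) + (-3 * g₂) * (deriv f y)) + (12) * (((deriv (deriv p) y) * (deriv f y) + (deriv p y) * (deriv^[2] f y)))) + (6) * (((deriv p y) * (deriv^[2] f y) + (p y) * (deriv^[3] f y)))) + (36) * (((((deriv p y) * (p y) + (p y) * (deriv p y))) * (f y) + ((p y) * (p y)) * (deriv f y))))) y := ((((HasDerivAt.const_mul (-1) (hFn 4 y hy)).add (HasDerivAt.const_mul (-3 * g₂) (hF0 y hy))).add (HasDerivAt.const_mul (12) ((hP1 y hy).mul (hF1 y hy)))).add (HasDerivAt.const_mul (6) ((hP0 y hy).mul (hFn 2 y hy)))).add (HasDerivAt.const_mul (36) (((hP0 y hy).mul (hP0 y hy)).mul (hF0 y hy)))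
    rw [heq, hE.deriv]
    linear_combination ((12) * (deriv f y)) * hp'' y hy
  have h4 : ∀ y ∈ U, deriv (deriv (deriv (deriv (HLame p f)))) y = (-1) * (deriv^[6] f y) + (-72 * g₃) * (f y) + (-18 * g₂) * (deriv^[2] f y) + (24) * ((deriv p y) * (deriv^[3] f y)) + (6) * ((p y) * (deriv^[4] f y)) + (-108 * g₂) * ((p y) * (f y)) + (288) * (((p y) * (deriv p y)) * (deriv f y)) + (216) * (((p y) * (p y)) * (deriv^[2] f y)) + (720) * ((((p y) * (p y)) * (p y)) * (f y)) := by
    intro y hy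
    have heq : deriv (deriv (deriv (deriv (HLame p f)))) y = deriv (fun z => (-1) * (deriv^[5] f z) + (-9 * g₂) * (deriv f z) + (18) * ((deriv p z) * (deriv^[2] f z)) + (6) * ((p z) * (deriv^[3] f z)) + (72) * (((p z) * (deriv p z)) * (f z)) + (108) * (((p z) * (p z)) * (deriv f z))) y :=
      Filter.EventuallyEq.deriv_eq (Filter.eventuallyEq_of_mem (hU.mem_nhds hy) fun z hz => h3 z hz)
    have hE : HasDerivAt (fun z => (-1) * (deriv^[5] f z) + (-9 * g₂) * (deriv f z) + (18) * ((deriv p z) * (deriv^[2] f z)) + (6) * ((p z) * (deriv^[3] f z)) + (72) * (((p z) * (deriv p z)) * (f z)) + (108) * (((p z) * (p z)) * (deriv f z))) (((((((-1) * (deriv^[6] f y) + (-9 * g₂) * (deriv^[2] f y)) + (18) * (((deriv (deriv p) y) * (deriv^[2] f y) + (deriv p y) * (deriv^[3] f y)))) + (6) * (((deriv p y) * (deriv^[3] f y) + (p y) * (deriv^[4] f y)))) + (72) * (((((deriv p y) * (deriv p y) + (p y) * (deriv (deriv p) y))) * (f y) + ((p y) * (deriv p y)) * (deriv f y)))) +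 (108) * (((((deriv p y) * (p y) + (p y) * (deriv p y))) * (deriv f y) + ((p y) * (p y)) * (deriv^[2] f y))))) y := (((((HasDerivAt.const_mul (-1) (hFn 5 y hy)).add (HasDerivAt.const_mul (-9 * g₂) (hF1 y hy))).add (HasDerivAt.const_mul (18) ((hP1 y hy).mul (hFn 2 y hy)))).add (HasDerivAt.const_mul (6) ((hP0 y hy).mul (hFn 3 y hy)))).add (HasDerivAt.const_mul (72) (((hP0 y hy).mul (hP1 y hy)).mul (hF0 y hy)))).add (HasDerivAt.const_mul (108) (((hP0 y hy).mul (hP0 y hy)).mul (hF1 y hy)))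
    rw [heq, hE.deriv]
    linear_combination ((18) * (deriv^[2] f y) + (72) * (p y) * (f y)) * hp'' y hy + ((72) * (f y)) * hp' y hy
  have h5 : ∀ y ∈ U, deriv (deriv (deriv (deriv (deriv (HLame p f))))) y = (-1) * (deriv^[7] f y) + (-360 * g₃) * (deriv f y) + (-30 * g₂) * (deriv^[3] f y) + (30) * ((deriv p y) * (deriv^[4] f y)) + (-108 * g₂) * ((deriv p y) * (f y)) + (6) * ((p y) * (deriv^[5] f y)) + (-540 * g₂) * ((p y) * (deriv f y)) + (720) * (((p y) * (deriv p y)) * (deriv^[2] f y)) + (360) * (((p y) * (p y)) * (deriv^[3] f y)) + (2160) * ((((p y) * (p y)) * (deriv p y)) * (f y)) + (3600) * ((((p y) * (p y)) * (p y)) * (deriv f y)) := by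
    intro y hy
    have heq : deriv (deriv (deriv (deriv (deriv (HLame p f))))) y = deriv (fun z => (-1) * (deriv^[6] f z) + (-72 * g₃) * (f z) + (-18 * g₂) * (deriv^[2] f z) + (24) * ((deriv p z) * (deriv^[3] f z)) + (6) * ((p z) * (deriv^[4] f z)) + (-108 * g₂) * ((p z) * (f z)) + (288) * (((p z) * (deriv p z)) * (deriv f z)) + (216) * (((p z) * (p z)) * (deriv^[2] f z)) + (720) * ((((p z) * (p z)) * (p z)) * (f z))) y :=
      Filter.EventuallyEq.deriv_eq (Filter.eventuallyEq_of_mem (hU.mem_nhds hy) fun z hz => h4 z hz)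
    have hE : HasDerivAt (fun z => (-1) * (deriv^[6] f z) + (-72 * g₃) * (f z) + (-18 * g₂) * (deriv^[2] f z) + (24) * ((deriv p z) * (deriv^[3] f z)) + (6) * ((p z) * (deriv^[4] f z)) + (-108 * g₂) * ((p z) * (f z)) + (288) * (((p z) * (deriv p z)) * (deriv f z)) + (216) * (((p z) * (p z)) * (deriv^[2] f z)) + (720) * ((((p z) * (p z)) * (p z)) * (f z))) ((((((((((-1) * (deriv^[7] f y) + (-72 * g₃) * (deriv f y)) + (-18 * g₂) * (deriv^[3] f y)) + (24) * (((deriv (deriv p) y) * (deriv^[3] f y) + (deriv p y) * (deriv^[4] f y)))) + (6) * (((deriv p y) * (deriv^[4] f y) + (p y) * (deriv^[5] f y)))) + (-108 * g₂) * (((deriv p y) * (f y) + (p y) * (deriv f y)))) + (288) * (((((deriv p y) * (deriv p y) + (p y) * (deriv (deriv p) y))) * (deriv f y) + ((p y) * (deriv p y)) * (deriv^[2] f y)))) + (216) * (((((deriv p y) * (p y) + (p y) * (deriv p y))) * (deriv^[2] f y) + ((p y) * (p y)) * (deriv^[3] f y)))) + (720) * (((((((deriv p y) * (p y) + (p y)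 * (deriv p y))) * (p y) + ((p y) * (p y)) * (deriv p y))) * (f y) + (((p y) * (p y)) * (p y)) * (deriv f y))))) y := ((((((((HasDerivAt.const_mul (-1) (hFn 6 y hy)).add (HasDerivAt.const_mul (-72 * g₃) (hF0 y hy))).add (HasDerivAt.const_mul (-18 * g₂) (hFn 2 y hy))).add (HasDerivAt.const_mul (24) ((hP1 y hy).mul (hFn 3 y hy)))).add (HasDerivAt.const_mul (6) ((hP0 y hy).mul (hFn 4 y hy)))).add (HasDerivAt.const_mul (-108 * g₂) ((hP0 y hy).mul (hF0 y hy)))).add (HasDerivAt.const_mul (288) (((hP0 y hy).mul (hP1 y hy)).mul (hF1 y hy)))).add (HasDerivAt.const_mul (216) (((hP0 y hy).mul (hP0 y hy)).mul (hFn 2 y hy)))).add (HasDerivAt.const_mul (720) ((((hP0 y hy).mul (hP0 y hy)).mul (hP0 y hy)).mul (hF0 y hy)))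
    rw [heq, hE.deriv]
    linear_combination ((24) * (deriv^[3] f y) + (288) * (p y) * (deriv f y)) * hp'' y hy + ((288) * (deriv f y)) * hp' y hy
  have hA1 : ∀ y ∈ U, deriv (ALame g₂ p f) y = (1) * (deriv^[6] f y) + (18 * g₂) * (deriv^[2] f y) + (-75 / 2) * ((deriv p y) * (deriv^[3] f y)) + (-15) * ((p y) * (deriv^[4] f y)) + (-90) * (((p y) * (deriv p y)) * (deriv f y)) + (-180) * (((p y) * (p y)) * (deriv^[2] f y)) := by
    intro y hy
    have hE : HasDerivAt (ALame g₂ p f) ((((deriv^[6] f y - ((((15) * (deriv p y)) * (deriv^[3] f y) + ((15) * (p y)) * (deriv^[4] f y)))) - ((((45 / 2) * (deriv (deriv p) y)) * (deriv^[2] f y) + ((45 / 2) * (deriv p y)) * (deriv^[3] f y)))) - ((((9) * (((5) * (2 * p y * deriv p y)))) * (deriv f y) + ((9) * ((5) * (p y ^ 2) - 3 / 4 * g₂)) * (deriv^[2] f y))))) y := (((hFn 5 y hy).sub ((HasDerivAt.const_mul (15) (hP0 y hy)).mul (hFn 3 y hy))).sub ((HasDerivAt.const_mul (45 / 2) (hP1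 y hy)).mul (hFn 2 y hy))).sub ((HasDerivAt.const_mul (9) ((HasDerivAt.const_mul (5) (hP0sq y hy)).sub_const (3 / 4 * g₂))).mul (hF1 y hy))
    rw [hE.deriv]
    linear_combination ((-45 / 2) * (deriv^[2] f y)) * hp'' y hy
  have hA2eq : deriv (deriv (ALame g₂ p f)) x = deriv (fun z => (1) * (deriv^[6] f z) + (18 * g₂) * (deriv^[2] f z) + (-75 / 2) * ((deriv p z) * (deriv^[3] f z)) + (-15) * ((p z) * (deriv^[4] f z)) + (-90) * (((p z) * (deriv p z)) * (deriv f z)) + (-180) * (((p z) * (p z)) * (deriv^[2] f z))) x :=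
    Filter.EventuallyEq.deriv_eq (Filter.eventuallyEq_of_mem (hU.mem_nhds hx) fun z hz => hA1 z hz)
  have hE2 : HasDerivAt (fun z => (1) * (deriv^[6] f z) + (18 * g₂) * (deriv^[2] f z) + (-75 / 2) * ((deriv p z) * (deriv^[3] f z)) + (-15) * ((p z) * (deriv^[4] f z)) + (-90) * (((p z) * (deriv p z)) * (deriv f z)) + (-180) * (((p z) * (p z)) * (deriv^[2] f z))) (((((((1) * (deriv^[7] f x) + (18 * g₂) * (deriv^[3] f x)) + (-75 / 2) * (((deriv (deriv p) x) * (deriv^[3] f x) + (deriv p x) * (deriv^[4] f x)))) + (-15) * (((deriv p x) * (deriv^[4] f x) + (p x) * (deriv^[5] f x)))) + (-90) * (((((deriv p x) * (deriv p x) + (p x) * (deriv (deriv p) x))) * (deriv f x) + ((p x) * (deriv p x)) * (deriv^[2] f x)))) + (-180) * (((((deriv p x) * (p x) + (p x) * (deriv p x))) * (deriv^[2] f x) + ((p x) * (p x)) * (deriv^[3] f x))))) x := (((((HasDerivAt.const_mul (1) (hFn 6 x hx)).add (HasDerivAt.const_mul (18 * g₂) (hFn 2 x hx))).add (HasDerivAt.const_mul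 (-75 / 2) ((hP1 x hx).mul (hFn 3 x hx)))).add (HasDerivAt.const_mul (-15) ((hP0 x hx).mul (hFn 4 x hx)))).add (HasDerivAt.const_mul (-90) (((hP0 x hx).mul (hP1 x hx)).mul (hF1 x hx)))).add (HasDerivAt.const_mul (-180) (((hP0 x hx).mul (hP0 x hx)).mul (hFn 2 x hx)))
  have hL : ALame g₂ p (HLame p f) x = deriv (deriv (deriv (deriv (deriv (HLame p f))))) x - 15 * p x * deriv (deriv (deriv (HLame p f))) x - 45 / 2 * deriv p x * deriv (deriv (HLame p f)) x - 9 * (5 * p x ^ 2 - 3 / 4 * g₂) * deriv (HLame p f) x := rfl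
  have hR : HLame p (ALame g₂ p f) x = -(deriv (deriv (ALame g₂ p f)) x) + 6 * p x * (deriv^[5] f x - ((15) * (p x)) * (deriv^[3] f x) - ((45 / 2) * (deriv p x)) * (deriv^[2] f x) - ((9) * ((5) * (p x ^ 2) - 3 / 4 * g₂)) * (deriv f x)) := rfl
  rw [hL, hR, h5 x hx, h3 x hx, h2 x hx, h1 x hx, hA2eq, hE2.deriv]
  linear_combination ((-75 / 2) * (deriv^[3] f x) + (-90) * (p x) * (deriv f x)) * hp'' x hx + ((-360) * (deriv f x)) * hp' x hx
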